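/- Rectangle property: if [ts',te'] is the tightest time interval of the core induced by [ts,te] (so [ts',te'] ⊆ [ts,te]), then every interval [r,c] in the rectangle {[r,c] | ts ≤ r ≤ ts', te' ≤ c ≤ te} induces a temporal k-core identical to T^k_[ts,te]. -/

import Mathlib

abbrev TEdge : Type := ℕ × ℕ × ℤ

/-- Projection of a temporal edge set over time interval [a,b]. -/
def projE (E : Finset TEdge) (a b : ℤ) : Finset TEdge :=
  E.filter (fun e => a ≤ e.2.2 ∧ e.2.2 ≤ b)

def verts (E : Finset TEdge) : Finset ℕ :=
  E.image (fun e => e.1) ∪ E.image (fun e => e.2.1)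

/-- Distinct neighbors of `v` inside vertex set `S` via edges of `E`. -/
def nbrs (E : Finset TEdge) (S : Finset ℕ) (v : ℕ) : Finset ℕ :=
  S.filter (fun u => u ≠ v ∧
    (E.filter (fun e => (e.1 = u ∧ e.2.1 = v) ∨ (e.1 = v ∧ e.2.1 = u))).Nonempty)

/-- `S` is a `k`-core candidate: every vertex of `S` has ≥ k distinct neighbors in `S`. -/
def isCoreSet (E : Finset TEdge) (k : ℕ) (S : Finset ℕ) : Prop :=
  ∀ v ∈ S, k ≤ (nbrs E S v).card

instance (E : Finset TEdge) (k : ℕ) : DecidablePred (isCoreSet E k) := fun S => by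
  unfold isCoreSet; infer_instance

/-- The `k`-core vertex set of a temporal edge set: union of all candidates. -/
def core (E : Finset TEdge) (k : ℕ) : Finset ℕ :=
  ((verts E).powerset.filter (isCoreSet E k)).sup id

/-- The edges of `E` induced among the `k`-core vertices. -/
def coreEdges (E : Finset TEdge) (k : ℕ) : Finset TEdge :=
  E.filter (fun e => e.1 ∈ core E k ∧ e.2.1 ∈ core E k)

/-- Vertices of the temporal k-core of interval [a,b]. -/
def coreV (E : Finset TEdge) (k : ℕ) (a b : ℤ) : Finset ℕ :=
  core (projE E a b) k

/-- Temporal edges of the temporal k-core of interval [a,b]. -/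
def coreE (E : Finset TEdge) (k : ℕ) (a b : ℤ) : Finset TEdge :=
  coreEdges (projE E a b) k

/-- Two intervals induce identical temporal k-cores (same vertices and temporal edges). -/
def identCore (E : Finset TEdge) (k : ℕ) (a b a' b' : ℤ) : Prop :=
  coreV E k a b = coreV E k a' b' ∧ coreE E k a b = coreE E k a' b'

/-!
Shrinking the window from `[ts, te]` to `[r, c]` only deletes edges whose timestamps lie outside
`[ts', te']`, hence outside the core. If `A ⊆ B` are edge sets and every core edge of `B` lies in
`A`, then the core of `A` is contained in that of `B` (monotonicity), while the core of `B`
keeps all its degrees in `A` and so is a candidate for `A`. Hence both graphs have the same core.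
-/

namespace TemporalCore

variable {A B E : Finset TEdge} {k v : ℕ}

lemma mem_verts : v ∈ verts E ↔ ∃ e ∈ E, e.1 = v ∨ e.2.1 = v := by
  simp only [verts, Finset.mem_union, Finset.mem_image, ← exists_or, ← and_or_left]

lemma mem_core_iff : v ∈ core E k ↔ ∃ S, S ⊆ verts E ∧ isCoreSet E k S ∧ v ∈ S := by
  simp [core, Finset.mem_sup, and_assoc]

lemma subset_core {S : Finset ℕ} (hS : S ⊆ verts E) (hcore : isCoreSet E k S) :
    S ⊆ core E k :=
  fun _ hv => mem_core_iff.2 ⟨S, hS, hcore, hv⟩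

lemma core_subset_verts : core E k ⊆ verts E := by
  intro v hv
  obtain ⟨S, hS, -, hvS⟩ := mem_core_iff.1 hv
  exact hS hvS

lemma nbrs_mono {S T : Finset ℕ} (hAB : A ⊆ B) (hST : S ⊆ T) : nbrs A S v ⊆ nbrs B T v := by
  intro u hu
  simp only [nbrs, Finset.mem_filter] at hu ⊢
  obtain ⟨huS, hne, e, he⟩ := hu
  rw [Finset.mem_filter] at he
  exact ⟨hST huS, hne, e, Finset.mem_filter.2 ⟨hAB he.1, he.2⟩⟩

lemma isCoreSet_core : isCoreSet E k (core E k) := by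
  intro v hv
  obtain ⟨S, hS, hcore, hvS⟩ := mem_core_iff.1 hv
  exact (hcore v hvS).trans
    (Finset.card_le_card (nbrs_mono subset_rfl (subset_core hS hcore)))

lemma core_mono (hAB : A ⊆ B) : core A k ⊆ core B k :=
  subset_core (core_subset_verts.trans (by unfold verts; gcongr))
    fun v hv => (isCoreSet_core v hv).trans (Finset.card_le_card (nbrs_mono hAB subset_rfl))

lemma mem_coreEdges {e : TEdge} :
    e ∈ coreEdges E k ↔ e ∈ E ∧ e.1 ∈ core E k ∧ e.2.1 ∈ core E k :=
  Finset.mem_filter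

lemma core_zero : core E 0 = verts E :=
  core_subset_verts.antisymm (subset_core subset_rfl fun _ _ => Nat.zero_le _)

lemma core_subset_verts_coreEdges : core E k ⊆ verts (coreEdges E k) := by
  intro v hv
  rcases k.eq_zero_or_pos with rfl | hk
  · obtain ⟨e, he, hev⟩ := mem_verts.1 (core_subset_verts hv)
    have hends : e.1 ∈ core E 0 ∧ e.2.1 ∈ core E 0 := by
      simp only [core_zero, mem_verts]
      exact ⟨⟨e, he, .inl rfl⟩, ⟨e, he, .inr rfl⟩⟩
    exact mem_verts.2 ⟨e, mem_coreEdges.2 ⟨he, hends⟩, hev⟩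
  · obtain ⟨u, hu⟩ := Finset.card_pos.1 (hk.trans_le (isCoreSet_core v hv))
    simp only [nbrs, Finset.mem_filter] at hu
    obtain ⟨huS, -, e, he⟩ := hu
    obtain ⟨he, hends⟩ := Finset.mem_filter.1 he
    refine mem_verts.2 ⟨e, mem_coreEdges.2 ⟨he, ?_⟩, ?_⟩
    · rcases hends with ⟨h1, h2⟩ | ⟨h1, h2⟩ <;> rw [h1, h2] <;> simp [hv, huS]
    · rcases hends with ⟨-, h2⟩ | ⟨h1, -⟩ <;> simp [*]

lemma nbrs_core_subset_of_coreEdges_subset (hC : coreEdges B k ⊆ A) (hv : v ∈ core B k) :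
    nbrs B (core B k) v ⊆ nbrs A (core B k) v := by
  intro u hu
  simp only [nbrs, Finset.mem_filter] at hu ⊢
  obtain ⟨huS, hne, e, he⟩ := hu
  obtain ⟨he, hends⟩ := Finset.mem_filter.1 he
  refine ⟨huS, hne, e, Finset.mem_filter.2 ⟨hC (mem_coreEdges.2 ⟨he, ?_⟩), hends⟩⟩
  rcases hends with ⟨h1, h2⟩ | ⟨h1, h2⟩ <;> rw [h1, h2] <;> simp [hv, huS]

lemma core_eq_of_coreEdges_subset (hAB : A ⊆ B) (hC : coreEdges B k ⊆ A) :
    core A k = core B k := by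
  refine (core_mono hAB).antisymm (subset_core ?_ fun v hv => ?_)
  · exact core_subset_verts_coreEdges.trans (by unfold verts; gcongr)
  · exact (isCoreSet_core v hv).trans
      (Finset.card_le_card (nbrs_core_subset_of_coreEdges_subset hC hv))

lemma coreEdges_eq_of_coreEdges_subset (hAB : A ⊆ B) (hC : coreEdges B k ⊆ A) :
    coreEdges A k = coreEdges B k := by
  ext e
  rw [mem_coreEdges, mem_coreEdges, core_eq_of_coreEdges_subset hAB hC]
  exact ⟨fun ⟨he, hends⟩ => ⟨hAB he, hends⟩,
    fun ⟨he, hends⟩ => ⟨hC (mem_coreEdges.2 ⟨he, hends⟩), hends⟩⟩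

lemma projE_subset_projE {a b a' b' : ℤ} (ha : a' ≤ a) (hb : b ≤ b') :
    projE E a b ⊆ projE E a' b' :=
  Finset.monotone_filter_right _ fun _ _ h => ⟨ha.trans h.1, h.2.trans hb⟩

end TemporalCore

open TemporalCore in
theorem stmt_10_general (E : Finset TEdge) (k : ℕ) (ts te ts' te' : ℤ)
    (hmin : IsLeast {t : ℤ | ∃ e ∈ coreE E k ts te, e.2.2 = t} ts')
    (hmax : IsGreatest {t : ℤ | ∃ e ∈ coreE E k ts te, e.2.2 = t} te') :
    ∀ r c : ℤ, ts ≤ r → r ≤ ts' → te' ≤ c → c ≤ te →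
      identCore E k r c ts te := by
  intro r c hr hr' hc hc'
  have hsub : projE E r c ⊆ projE E ts te := projE_subset_projE hr hc'
  have hcore : coreEdges (projE E ts te) k ⊆ projE E r c := by
    intro e he
    have heE : e ∈ E := (Finset.mem_filter.1 (mem_coreEdges.1 he).1).1
    exact Finset.mem_filter.2
      ⟨heE, hr'.trans (hmin.2 ⟨e, he, rfl⟩), (hmax.2 ⟨e, he, rfl⟩).trans hc⟩
  exact ⟨core_eq_of_coreEdges_subset hsub hcore, coreEdges_eq_of_coreEdges_subset hsub hcore⟩

/-- rectangle property: if [ts',te'] is the TTI of the core induced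
by [ts,te], then every interval [r,c] with ts ≤ r ≤ ts' and te' ≤ c ≤ te induces
a temporal k-core identical to T^k_[ts,te]. -/
theorem stmt_10 (E : Finset TEdge) (k : ℕ) (ts te ts' te' : ℤ)
    (h : (coreE E k ts te).Nonempty)
    (hmin : IsLeast {t : ℤ | ∃ e ∈ coreE E k ts te, e.2.2 = t} ts')
    (hmax : IsGreatest {t : ℤ | ∃ e ∈ coreE E k ts te, e.2.2 = t} te') :
    ∀ r c : ℤ, ts ≤ r → r ≤ ts' → te' ≤ c → c ≤ te →
      identCore E k r c ts te :=
  stmt_10_general E k ts te ts' te' hmin hmax
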